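/- Let 0 ≤ k < ⌊d/2⌋ and φ ∈ S_d^*. The (d−k)×(k+2) Hankel matrix M with entries M_{i,j} = Z_{i+j}, where Z_i = φ(x^{d−i} y^i), has rank at most k+1 if and only if there exist linear forms L_1,...,L_{k+1} such that φ(L_1 · L_2 ⋯ L_{k+1} · h) = 0 for all h ∈ S_{d−k−1}. -/

import Mathlib

open MvPolynomial Finset

noncomputable section

def linForm (K : Type) [Field K] (c : Fin 2 → K) : MvPolynomial (Fin 2) K :=
  C (c 0) * X 0 + C (c 1) * X 1

/-- `α` is not a scalar multiple of `β` (for nonzero vectors: distinct points of `ℙ¹`). -/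
def NonProp (K : Type) [Field K] (α β : Fin 2 → K) : Prop := ∀ t : K, α ≠ t • β

/-- The Waring rank of a binary form: the least `r` such that `q` is a sum of `r`
`d`-th powers of linear forms. -/
def waringRank (K : Type) [Field K] (d : ℕ) (q : MvPolynomial (Fin 2) K) : ℕ :=
  sInf {r : ℕ | ∃ L : Fin r → Fin 2 → K, q = ∑ i, linForm K (L i) ^ d}

/-!
A vector `c ∈ K^{k+2}` is the coefficient vector of the binary form `g = ∑ c_j x^{k+1-j} y^j`,
and the `i`-th entry of `M c` is `φ(g · x^{d-k-1-i} y^i)`. So `M` has a nonzero kernel vector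
(equivalently, rank `≤ k+1`) iff some nonzero form `g` of degree `k+1` satisfies
`φ(g · S_{d-k-1}) = 0`, and over an algebraically closed field such a `g` is a product of `k+1`
linear forms.
-/

open scoped Matrix Polynomial

theorem Matrix.rank_lt_card_width_iff {m n K : Type*} [Fintype n] [Field K] (M : Matrix m n K) :
    M.rank < Fintype.card n ↔ ∃ c ≠ 0, M *ᵥ c = 0 := by
  have h := LinearMap.finrank_range_add_finrank_ker M.mulVecLin
  rw [Module.finrank_fintype_fun_eq_card] at h
  have hker : M.rank < Fintype.card n ↔ LinearMap.ker M.mulVecLin ≠ ⊥ := by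
    rw [Ne, ← Submodule.finrank_eq_zero, Matrix.rank]
    omega
  simp only [hker, Submodule.ne_bot_iff, LinearMap.mem_ker, Matrix.mulVecLin_apply]
  exact ⟨fun ⟨c, hc, hc0⟩ => ⟨c, hc0, hc⟩, fun ⟨c, hc0, hc⟩ => ⟨c, hc, hc0⟩⟩

variable {K : Type} [Field K]

theorem linForm_smul (a : K) (c : Fin 2 → K) : linForm K (a • c) = C a * linForm K c := by
  simp only [linForm, Pi.smul_apply, smul_eq_mul, map_mul]
  ring

theorem linForm_ne_zero {c : Fin 2 → K} (hc : c ≠ 0) : linForm K c ≠ 0 := by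
  contrapose! hc
  ext i
  fin_cases i
  · simpa [linForm] using congrArg (eval ![1, 0]) hc
  · simpa [linForm] using congrArg (eval ![0, 1]) hc

theorem isHomogeneous_linForm (c : Fin 2 → K) : (linForm K c).IsHomogeneous 1 :=
  (isHomogeneous_C_mul_X _ _).add (isHomogeneous_C_mul_X _ _)

theorem isHomogeneous_prod_linForm {m : ℕ} (L : Fin m → Fin 2 → K) :
    (∏ i, linForm K (L i)).IsHomogeneous m := by
  simpa using IsHomogeneous.prod Finset.univ (fun i => linForm K (L i)) (fun _ => 1)
    fun i _ => isHomogeneous_linForm (L i)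

theorem X_zero_pow_mul_X_one_pow (a b : ℕ) : (X 0 ^ a * X 1 ^ b : MvPolynomial (Fin 2) K) =
    monomial (Finsupp.single 0 a + Finsupp.single 1 b) 1 := by
  rw [X_pow_eq_monomial, X_pow_eq_monomial, monomial_mul, one_mul]

theorem isHomogeneous_X_zero_pow_mul_X_one_pow {n : ℕ} (i : ℕ) (hi : i ≤ n) :
    (X 0 ^ (n - i) * X 1 ^ i : MvPolynomial (Fin 2) K).IsHomogeneous n := by
  simpa [Nat.sub_add_cancel hi] using
    (isHomogeneous_X_pow 0 (n - i)).mul (isHomogeneous_X_pow 1 i)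

def binaryForm (n : ℕ) (c : Fin (n + 1) → K) : MvPolynomial (Fin 2) K :=
  ∑ j, c j • (X 0 ^ (n - j) * X 1 ^ (j : ℕ))

theorem isHomogeneous_binaryForm {n : ℕ} (c : Fin (n + 1) → K) :
    (binaryForm n c).IsHomogeneous n :=
  IsHomogeneous.sum _ _ _ fun j _ => by
    rw [smul_eq_C_mul]
    exact (isHomogeneous_X_zero_pow_mul_X_one_pow j (Nat.lt_succ_iff.mp j.isLt)).C_mul _

theorem coeff_binaryForm {n : ℕ} (c : Fin (n + 1) → K) (j : Fin (n + 1)) :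
    coeff (Finsupp.single (0 : Fin 2) (n - j) + Finsupp.single 1 (j : ℕ)) (binaryForm n c) =
      c j := by
  rw [binaryForm, coeff_sum, Finset.sum_eq_single j]
  · simp [X_zero_pow_mul_X_one_pow]
  · intro j' _ hj'
    rw [coeff_smul, X_zero_pow_mul_X_one_pow, coeff_monomial, if_neg, smul_zero]
    intro h
    exact hj' (Fin.ext (by simpa using congrArg (· 1) h))
  · simp

theorem binaryForm_eq_zero_iff {n : ℕ} {c : Fin (n + 1) → K} : binaryForm n c = 0 ↔ c = 0 := by
  refine ⟨fun h => funext fun j => ?_, fun h => by simp [h, binaryForm]⟩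
  rw [← coeff_binaryForm c j, h, coeff_zero, Pi.zero_apply]

theorem binaryForm_coeff_eq_self {n : ℕ} {g : MvPolynomial (Fin 2) K} (hg : g.IsHomogeneous n) :
    binaryForm n (fun j => coeff (Finsupp.single (0 : Fin 2) (n - j) + Finsupp.single 1 (j : ℕ)) g)
      = g := by
  ext s
  by_cases hs : s 0 + s 1 = n
  · have hs' : s = Finsupp.single 0 (n - s 1) + Finsupp.single 1 (s 1) := by
      ext i
      fin_cases i
      · simp
        omega
      · simp
    rw [hs']
    exact coeff_binaryForm _ ⟨s 1, by omega⟩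
  · have hdeg : s.degree ≠ n := by simpa [Finsupp.degree_eq_sum, Fin.sum_univ_two] using hs
    rw [(isHomogeneous_binaryForm _).coeff_eq_zero hdeg, hg.coeff_eq_zero hdeg]

theorem map_eq_zero_of_isHomogeneous {M : Type*} [AddCommMonoid M] [Module K M]
    (ψ : MvPolynomial (Fin 2) K →ₗ[K] M) {n : ℕ}
    (hψ : ∀ i ≤ n, ψ (X 0 ^ (n - i) * X 1 ^ i) = 0) {h : MvPolynomial (Fin 2) K}
    (hh : h.IsHomogeneous n) : ψ h = 0 := by
  rw [← binaryForm_coeff_eq_self hh, binaryForm, map_sum]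
  exact Finset.sum_eq_zero fun j _ => by
    rw [map_smul, hψ j (Nat.lt_succ_iff.mp j.isLt), smul_zero]

theorem natDegree_aeval_X_one_le {n : ℕ} {g : MvPolynomial (Fin 2) K} (hg : g.IsHomogeneous n) :
    (aeval ![Polynomial.X, (1 : K[X])] g).natDegree ≤ n := by
  rw [g.as_sum, map_sum]
  refine Polynomial.natDegree_sum_le_of_forall_le _ _ fun s hs => ?_
  rw [aeval_monomial, Finsupp.prod_fintype _ _ (by simp), Fin.prod_univ_two]
  simp only [Matrix.cons_val_zero, Matrix.cons_val_one, one_pow, mul_one, Polynomial.algebraMap_eq]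
  refine (Polynomial.natDegree_C_mul_X_pow_le _ _).trans ?_
  have hdeg := hg (mem_support_iff.mp hs)
  simp only [Finsupp.weight_apply, Pi.one_apply, smul_eq_mul, mul_one, Finsupp.sum_fintype,
    Fin.sum_univ_two, implies_true] at hdeg
  omega

theorem homogenize_X_sub_C_one (ρ : K) :
    (Polynomial.X - Polynomial.C ρ).homogenize 1 = linForm K ![1, -ρ] := by
  simp [linForm, sub_eq_add_neg]

/-- Dehomogenise at `y = 1` to `p`: if `p` has degree `< m + 1` then `y` divides `g`, otherwise a
root `ρ` of `p` gives the factor `x - ρ y`. -/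
theorem exists_linForm_mul_eq [IsAlgClosed K] {m : ℕ} {g : MvPolynomial (Fin 2) K}
    (hg : g.IsHomogeneous (m + 1)) :
    ∃ c ≠ 0, ∃ g' : MvPolynomial (Fin 2) K, g'.IsHomogeneous m ∧ g = linForm K c * g' := by
  set p := aeval ![Polynomial.X, (1 : K[X])] g
  have hpg : p.homogenize (m + 1) = g := Polynomial.homogenize_eq_of_isHomogeneous hg rfl
  have hp : p.natDegree ≤ m + 1 := natDegree_aeval_X_one_le hg
  rcases hp.lt_or_eq with hlt | heq
  · refine ⟨![0, 1], by simp, p.homogenize m, Polynomial.isHomogeneous_homogenize p, ?_⟩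
    rw [← hpg, add_comm, ← one_mul p, Polynomial.homogenize_mul _ _ (by simp) (by omega)]
    simp [linForm]
  · obtain ⟨ρ, hρ⟩ := IsAlgClosed.exists_root p
      (Polynomial.natDegree_pos_iff_degree_pos.mp (by omega)).ne'
    set q := p /ₘ (Polynomial.X - Polynomial.C ρ)
    have hq : q.natDegree ≤ m := by
      rw [Polynomial.natDegree_divByMonic _ (Polynomial.monic_X_sub_C ρ), heq,
        Polynomial.natDegree_X_sub_C]
      omega
    refine ⟨![1, -ρ], by simp, q.homogenize m, Polynomial.isHomogeneous_homogenize q, ?_⟩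
    rw [← hpg, ← Polynomial.mul_divByMonic_eq_iff_isRoot.2 hρ, add_comm,
      Polynomial.homogenize_mul _ _ (by simp) hq, homogenize_X_sub_C_one]

theorem exists_C_mul_prod_linForm_eq [IsAlgClosed K] {m : ℕ} {g : MvPolynomial (Fin 2) K}
    (hg : g.IsHomogeneous m) :
    ∃ (a : K) (L : Fin m → Fin 2 → K), (∀ i, L i ≠ 0) ∧ g = C a * ∏ i, linForm K (L i) := by
  induction m generalizing g with
  | zero =>
    exact ⟨coeff 0 g, finZeroElim, finZeroElim, by
      simpa using totalDegree_eq_zero_iff_eq_C.mp (Nat.le_zero.mp hg.totalDegree_le)⟩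
  | succ m ih =>
    obtain ⟨c, hc, g', hg', rfl⟩ := exists_linForm_mul_eq hg
    obtain ⟨a, L, hL, rfl⟩ := ih hg'
    refine ⟨a, Fin.cons c L, Fin.cases hc hL, ?_⟩
    simp only [Fin.prod_univ_succ, Fin.cons_zero, Fin.cons_succ]
    ring

theorem exists_prod_linForm_eq [IsAlgClosed K] {m : ℕ} {g : MvPolynomial (Fin 2) K}
    (hg : g.IsHomogeneous (m + 1)) (hg0 : g ≠ 0) :
    ∃ L : Fin (m + 1) → Fin 2 → K, (∀ i, L i ≠ 0) ∧ g = ∏ i, linForm K (L i) := by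
  obtain ⟨a, L, hL, rfl⟩ := exists_C_mul_prod_linForm_eq hg
  have ha : a ≠ 0 := by rintro rfl; simp at hg0
  refine ⟨Fin.cons (a • L 0) (Fin.tail L),
    Fin.cases (smul_ne_zero ha (hL 0)) fun i => hL i.succ, ?_⟩
  simp only [Fin.prod_univ_succ, Fin.cons_zero, Fin.cons_succ, Fin.tail, linForm_smul]
  ring

def hankelMatrix (φ : Module.Dual K (MvPolynomial (Fin 2) K)) (d k : ℕ) :
    Matrix (Fin (d - k)) (Fin (k + 2)) K :=
  Matrix.of fun i j => φ (X 0 ^ (d - ((i : ℕ) + (j : ℕ))) * X 1 ^ ((i : ℕ) + (j : ℕ)))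

theorem hankelMatrix_mulVec_apply (φ : Module.Dual K (MvPolynomial (Fin 2) K)) {d k : ℕ}
    (c : Fin (k + 2) → K) (i : Fin (d - k)) :
    (hankelMatrix φ d k *ᵥ c) i =
      φ (binaryForm (k + 1) c * (X 0 ^ (d - k - 1 - i) * X 1 ^ (i : ℕ))) := by
  simp only [Matrix.mulVec, dotProduct, hankelMatrix, Matrix.of_apply, binaryForm, Finset.sum_mul,
    map_sum, smul_mul_assoc, map_smul, smul_eq_mul]
  refine Finset.sum_congr rfl fun j _ => ?_
  rw [mul_comm, mul_mul_mul_comm, ← pow_add, ← pow_add]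
  have := i.isLt
  have := j.isLt
  congr 4 <;> omega

theorem hankelMatrix_mulVec_eq_zero_iff (φ : Module.Dual K (MvPolynomial (Fin 2) K)) {d k : ℕ}
    (hkd : k < d) (c : Fin (k + 2) → K) :
    hankelMatrix φ d k *ᵥ c = 0 ↔ ∀ h : MvPolynomial (Fin 2) K, h.IsHomogeneous (d - k - 1) →
      φ (binaryForm (k + 1) c * h) = 0 := by
  simp only [funext_iff, Pi.zero_apply, hankelMatrix_mulVec_apply]
  constructor
  · exact fun hc h => map_eq_zero_of_isHomogeneous (φ ∘ₗ LinearMap.mulLeft K _)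
      fun i hi => hc ⟨i, by omega⟩
  · exact fun hφ i => hφ _ (isHomogeneous_X_zero_pow_mul_X_one_pow i (by omega))

theorem stmt5_general (K : Type) [Field K] [IsAlgClosed K] (d k : ℕ) (hk : k < d / 2)
    (φ : Module.Dual K (MvPolynomial (Fin 2) K)) :
    ((Matrix.of fun (i : Fin (d - k)) (j : Fin (k + 2)) =>
        φ (X 0 ^ (d - ((i : ℕ) + (j : ℕ))) * X 1 ^ ((i : ℕ) + (j : ℕ)))).rank ≤ k + 1) ↔
    ∃ L : Fin (k + 1) → Fin 2 → K, (∀ i, L i ≠ 0) ∧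
      ∀ h : MvPolynomial (Fin 2) K, h.IsHomogeneous (d - k - 1) →
        φ ((∏ i, linForm K (L i)) * h) = 0 := by
  have hkd : k < d := by omega
  have hrank := (hankelMatrix φ d k).rank_lt_card_width_iff
  rw [Fintype.card_fin, Nat.lt_succ_iff] at hrank
  change (hankelMatrix φ d k).rank ≤ k + 1 ↔ _
  rw [hrank]
  constructor
  · rintro ⟨c, hc, hMc⟩
    obtain ⟨L, hL, hcL⟩ :=
      exists_prod_linForm_eq (isHomogeneous_binaryForm c) (binaryForm_eq_zero_iff.not.mpr hc)
    exact ⟨L, hL, hcL ▸ (hankelMatrix_mulVec_eq_zero_iff φ hkd c).mp hMc⟩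
  · rintro ⟨L, hL, hφ⟩
    have hLc := binaryForm_coeff_eq_self (isHomogeneous_prod_linForm L)
    refine ⟨_, fun hc => ?_, (hankelMatrix_mulVec_eq_zero_iff φ hkd _).mpr (hLc ▸ hφ)⟩
    rw [← binaryForm_eq_zero_iff, hLc] at hc
    exact Finset.prod_ne_zero_iff.mpr (fun i _ => linForm_ne_zero (hL i)) hc

/-- Lemma 5 (`secante`): for `0 ≤ k < ⌊d/2⌋`, the `(d-k)×(k+2)` Hankel matrix of `φ` has
rank `≤ k+1` iff `φ(L₁⋯L_{k+1}·S_{d-k-1}) = 0` for some linear forms `L_i`. -/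
theorem stmt5 (K : Type) [Field K] [IsAlgClosed K] [CharZero K] (d k : ℕ) (hk : k < d / 2)
    (φ : Module.Dual K (MvPolynomial (Fin 2) K)) :
    ((Matrix.of fun (i : Fin (d - k)) (j : Fin (k + 2)) =>
        φ (X 0 ^ (d - ((i : ℕ) + (j : ℕ))) * X 1 ^ ((i : ℕ) + (j : ℕ)))).rank ≤ k + 1) ↔
    ∃ L : Fin (k + 1) → Fin 2 → K, (∀ i, L i ≠ 0) ∧
      ∀ h : MvPolynomial (Fin 2) K, h.IsHomogeneous (d - k - 1) →
        φ ((∏ i, linForm K (L i)) * h) = 0 :=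
  stmt5_general K d k hk φ
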